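/- The clone generated by g₁ together with the constant functions true and false, where g₁(x,y,z) = x ∧ (y ∨ ¬z), is the full clone: every Boolean function f : (Fin n → Bool) → Bool with n ≥ 1 belongs to it. -/

import Mathlib

/-- The clone generated by a set `B` of Boolean functions: the smallest family containing all
projections and `B`, and closed under composition. -/
inductive InClone (B : (k : ℕ) → ((Fin k → Bool) → Bool) → Prop) :
    (n : ℕ) → ((Fin n → Bool) → Bool) → Prop
  | proj {n : ℕ} (i : Fin n) : InClone B n (fun x => x i)
  | base {k : ℕ} {g : (Fin k → Bool) → Bool} (hg : B k g) : InClone B k g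
  | comp {k n : ℕ} {g : (Fin k → Bool) → Bool} {h : Fin k → ((Fin n → Bool) → Bool)}
      (hg : InClone B k g) (hh : ∀ i, InClone B n (h i)) :
      InClone B n (fun x => g (fun i => h i x))

/-- g₁(x,y,z) = x ∧ (y ∨ ¬z). -/
def g1 : (Fin 3 → Bool) → Bool := fun x => x 0 && (x 1 || !x 2)

/-- The generating set {g₁, 1, 0}: g₁ together with the constants true and false (arity 1). -/
inductive G1CBase : (k : ℕ) → ((Fin k → Bool) → Bool) → Prop
  | g1 : G1CBase 3 g1
  | one : G1CBase 1 (fun _ => true)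
  | zero : G1CBase 1 (fun _ => false)

/-! Shannon expansion on the first variable: `f x = if x 0 then f (true, x') else f (false, x')`.
A clone containing the constants and the multiplexer `cond` therefore contains, by induction on
the arity, every Boolean function of positive arity. Over `g₁(x,y,z) = x ∧ (y ∨ ¬z)` with the
constants, `g₁(1,0,z) = ¬z` and `g₁(x,y,1) = x ∧ y` give negation and conjunction, hence `cond`. -/

theorem shannon_expansion {m : ℕ} (f : (Fin (m + 1) → Bool) → Bool) (x : Fin (m + 1) → Bool) :
    f x = cond (x 0) (f (Fin.cons true (Fin.tail x))) (f (Fin.cons false (Fin.tail x))) := by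
  conv_lhs => rw [← Fin.cons_self_tail x]
  cases x 0 <;> rfl

namespace InClone

variable {B : (k : ℕ) → ((Fin k → Bool) → Bool) → Prop} {n : ℕ}

theorem comp₃ {g : (Fin 3 → Bool) → Bool} {p q r : (Fin n → Bool) → Bool}
    (hg : InClone B 3 g) (hp : InClone B n p) (hq : InClone B n q) (hr : InClone B n r) :
    InClone B n (fun x => g ![p x, q x, r x]) := by
  convert hg.comp (h := ![p, q, r]) (fun i => by fin_cases i <;> assumption) using 3 with x
  ext i; fin_cases i <;> rfl

theorem const_of_unary [NeZero n] {b : Bool} (hb : InClone B 1 (fun _ => b)) :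
    InClone B n (fun _ => b) :=
  hb.comp (fun _ => proj 0)

theorem comp_tail {m : ℕ} {g : (Fin m → Bool) → Bool} (hg : InClone B m g) :
    InClone B (m + 1) (fun x => g (Fin.tail x)) :=
  hg.comp (fun i => proj i.succ)

theorem full_of_consts_of_cond (htrue : InClone B 1 (fun _ => true))
    (hfalse : InClone B 1 (fun _ => false))
    (hcond : InClone B 3 (fun x => cond (x 0) (x 1) (x 2))) :
    ∀ (m : ℕ) (f : (Fin (m + 1) → Bool) → Bool), InClone B (m + 1) f := by
  have hconst (m : ℕ) (b : Bool) : InClone B (m + 1) (fun _ => b) := by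
    cases b
    exacts [const_of_unary hfalse, const_of_unary htrue]
  intro m
  induction m with
  | zero =>
    intro f
    have hcons (b : Bool) (x : Fin 1 → Bool) :
        (Fin.cons b (Fin.tail x) : Fin 1 → Bool) = fun _ => b := funext fun i => by fin_cases i; rfl
    rw [funext (shannon_expansion f)]
    simp only [hcons]
    exact comp₃ hcond (proj 0) (hconst 0 _) (hconst 0 _)
  | succ m ih =>
    intro f
    rw [funext (shannon_expansion f)]
    exact comp₃ hcond (proj 0) (comp_tail (ih fun y => f (Fin.cons true y)))
      (comp_tail (ih fun y => f (Fin.cons false y)))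

end InClone

namespace G1CBase

variable {n : ℕ} [NeZero n]

theorem inClone_const (b : Bool) : InClone G1CBase n (fun _ => b) := by
  cases b
  exacts [InClone.const_of_unary (.base zero), InClone.const_of_unary (.base one)]

theorem inClone_not {p : (Fin n → Bool) → Bool} (hp : InClone G1CBase n p) :
    InClone G1CBase n (fun x => !p x) :=
  InClone.comp₃ (.base g1) (inClone_const true) (inClone_const false) hp

theorem inClone_and {p q : (Fin n → Bool) → Bool} (hp : InClone G1CBase n p)
    (hq : InClone G1CBase n q) : InClone G1CBase n (fun x => p x && q x) := by
  simpa [_root_.g1] using InClone.comp₃ (.base g1) hp hq (inClone_const true)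

theorem inClone_cond : InClone G1CBase 3 (fun x => cond (x 0) (x 1) (x 2)) := by
  have hx (i : Fin 3) : InClone G1CBase 3 (fun x => x i) := .proj i
  have h := inClone_not (inClone_and (inClone_not (inClone_and (hx 0) (hx 1)))
    (inClone_not (inClone_and (inClone_not (hx 0)) (hx 2))))
  convert h using 2 with x
  cases x 0 <;> cases x 1 <;> cases x 2 <;> rfl

end G1CBase

/-- The clone generated by {g₁, 1, 0} is the full clone. -/
theorem clone_g1_consts_full {n : ℕ} (hn : 1 ≤ n) (f : (Fin n → Bool) → Bool) :
    InClone G1CBase n f := by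
  obtain ⟨m, rfl⟩ : ∃ m, n = m + 1 := ⟨n - 1, by omega⟩
  exact InClone.full_of_consts_of_cond (.base .one) (.base .zero) G1CBase.inClone_cond m f
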